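/- arXiv:2311.10076 — 4 statements merged into one kernel-verified Lean document; each statement's English description precedes it below -/
import Mathlib

section
/- Let π_T ∈ (0,1) and let (π_R, π_M) ∈ (0,1)² and (π_R̄, π_M̄) ∈ (0,1)² satisfy π_T = π_M + π_R − π_M·π_R and 1 − π_T = π_M̄ + π_R̄ − π_M̄·π_R̄. Then there exists a probability space carrying a random variable T ∼ Bernoulli(π_T) and random variables (R, M, R̄, M̄) ∈ {0,1}⁴ such that: (a) R and M are independent with R ∼ Bernoulli(π_R) and M ∼ Bernoulli(π_M); (b) R̄ and M̄ are independent with R̄ ∼ Bernoulli(π_R̄) and M̄ ∼ Bernoulli(π_M̄); (c) almost surely max{R, M} ≤ T and max{R̄, M̄} ≤ 1 − T; (d) Cov(M, M̄) = −π_M·π_M̄. -/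
open MeasureTheory ProbabilityTheory

lemma preimage_mem_gen {Ω : Type} (X : Ω → ℝ) (hX01 : ∀ ω, X ω = 0 ∨ X ω = 1)
    (s : Set ℝ) :
    MeasurableSet[MeasurableSpace.generateFrom
      ({{ω | X ω = 1}} : Set (Set Ω))] (X ⁻¹' s) := by
  set m := MeasurableSpace.generateFrom ({{ω | X ω = 1}} : Set (Set Ω)) with hm
  have hAm : MeasurableSet[m] {ω | X ω = 1} :=
    MeasurableSpace.measurableSet_generateFrom (Set.mem_singleton _)
  by_cases h1 : (1:ℝ) ∈ s <;> by_cases h0 : (0:ℝ) ∈ s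
  · have : X ⁻¹' s = Set.univ := by
      ext ω; simp only [Set.mem_preimage, Set.mem_univ, iff_true]
      rcases hX01 ω with h | h <;> rw [h] <;> assumption
    rw [this]; exact @MeasurableSet.univ _ m
  · have : X ⁻¹' s = {ω | X ω = 1} := by
      ext ω; simp only [Set.mem_preimage, Set.mem_setOf_eq]
      rcases hX01 ω with h | h <;> rw [h] <;> simp [h0, h1]
    rw [this]; exact hAm
  · have : X ⁻¹' s = {ω | X ω = 1}ᶜ := by
      ext ω; simp only [Set.mem_preimage, Set.mem_compl_iff, Set.mem_setOf_eq]
      rcases hX01 ω with h | h <;> rw [h] <;> simp [h0, h1]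
    rw [this]; exact hAm.compl
  · have : X ⁻¹' s = ∅ := by
      ext ω; simp only [Set.mem_preimage, Set.mem_empty_iff_false, iff_false]
      rcases hX01 ω with h | h <;> rw [h] <;> assumption
    rw [this]; exact @MeasurableSet.empty _ m

lemma bernoulli_indepFun {Ω : Type} [MeasurableSpace Ω] (P : Measure Ω)
    [IsProbabilityMeasure P] (X Y : Ω → ℝ)
    (hX01 : ∀ ω, X ω = 0 ∨ X ω = 1) (hY01 : ∀ ω, Y ω = 0 ∨ Y ω = 1)
    (hA : MeasurableSet {ω | X ω = 1}) (hB : MeasurableSet {ω | Y ω = 1})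
    (h : P ({ω | X ω = 1} ∩ {ω | Y ω = 1}) = P {ω | X ω = 1} * P {ω | Y ω = 1}) :
    IndepFun X Y P := by
  have hAB : IndepSet {ω | X ω = 1} {ω | Y ω = 1} P :=
    (indepSet_iff_measure_inter_eq_mul hA hB P).mpr h
  rw [indepFun_iff_measure_inter_preimage_eq_mul]
  intro s t _ _
  have h2 : IndepSet (X ⁻¹' s) (Y ⁻¹' t) P :=
    Indep.indepSet_of_measurableSet hAB (preimage_mem_gen X hX01 s)
      (preimage_mem_gen Y hY01 t)
  exact ProbabilityTheory.IndepSet.measure_inter_eq_mul h2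

set_option maxHeartbeats 2000000 in
/-- Lemma 1 of the paper: existence of a decorrelating quadruple
`(R, M, R̄, M̄)` coupled with a Bernoulli treatment indicator `T`. -/
theorem decorrelating_sequence_exists
    (πT πR πM πRb πMb : ℝ)
    (hπT : πT ∈ Set.Ioo (0 : ℝ) 1) (hπR : πR ∈ Set.Ioo (0 : ℝ) 1)
    (hπM : πM ∈ Set.Ioo (0 : ℝ) 1) (hπRb : πRb ∈ Set.Ioo (0 : ℝ) 1)
    (hπMb : πMb ∈ Set.Ioo (0 : ℝ) 1)
    (hrel : πT = πM + πR - πM * πR)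
    (hrelb : 1 - πT = πMb + πRb - πMb * πRb) :
    ∃ (Ω : Type) (_ : MeasurableSpace Ω) (P : Measure Ω),
      IsProbabilityMeasure P ∧
      ∃ T R M Rb Mb : Ω → ℝ,
        Measurable T ∧ Measurable R ∧ Measurable M ∧ Measurable Rb ∧ Measurable Mb ∧
        (∀ ω, T ω = 0 ∨ T ω = 1) ∧ (∀ ω, R ω = 0 ∨ R ω = 1) ∧
        (∀ ω, M ω = 0 ∨ M ω = 1) ∧ (∀ ω, Rb ω = 0 ∨ Rb ω = 1) ∧
        (∀ ω, Mb ω = 0 ∨ Mb ω = 1) ∧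
        P {ω | T ω = 1} = ENNReal.ofReal πT ∧
        -- (a) R and M are independent Bernoulli(πR), Bernoulli(πM)
        IndepFun R M P ∧
        P {ω | R ω = 1} = ENNReal.ofReal πR ∧
        P {ω | M ω = 1} = ENNReal.ofReal πM ∧
        -- (b) R̄ and M̄ are independent Bernoulli(πR̄), Bernoulli(πM̄)
        IndepFun Rb Mb P ∧
        P {ω | Rb ω = 1} = ENNReal.ofReal πRb ∧
        P {ω | Mb ω = 1} = ENNReal.ofReal πMb ∧
        -- (c) almost surely max{R,M} ≤ T and max{R̄,M̄} ≤ 1 − T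
        (∀ᵐ ω ∂P, max (R ω) (M ω) ≤ T ω ∧ max (Rb ω) (Mb ω) ≤ 1 - T ω) ∧
        -- (d) Cov(M, M̄) = −πM·πM̄
        (∫ ω, M ω * Mb ω ∂P) - (∫ ω, M ω ∂P) * (∫ ω, Mb ω ∂P) = -(πM * πMb) := by
  obtain ⟨hT0, hT1⟩ := hπT
  obtain ⟨hR0, hR1⟩ := hπR
  obtain ⟨hM0, hM1⟩ := hπM
  obtain ⟨hRb0, hRb1⟩ := hπRb
  obtain ⟨hMb0, hMb1⟩ := hπMb
  -- weights on six atoms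
  set v : Fin 6 → ℝ :=
    ![πRb*πMb, πRb*(1-πMb), (1-πRb)*πMb, πR*πM, πR*(1-πM), (1-πR)*πM] with hv
  have n1R : (0:ℝ) ≤ 1 - πR := by linarith
  have n1M : (0:ℝ) ≤ 1 - πM := by linarith
  have n1Rb : (0:ℝ) ≤ 1 - πRb := by linarith
  have n1Mb : (0:ℝ) ≤ 1 - πMb := by linarith
  have nn0 : (0:ℝ) ≤ πRb*πMb := mul_nonneg hRb0.le hMb0.le
  have nn1 : (0:ℝ) ≤ πRb*(1-πMb) := mul_nonneg hRb0.le n1Mb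
  have nn2 : (0:ℝ) ≤ (1-πRb)*πMb := mul_nonneg n1Rb hMb0.le
  have nn3 : (0:ℝ) ≤ πR*πM := mul_nonneg hR0.le hM0.le
  have nn4 : (0:ℝ) ≤ πR*(1-πM) := mul_nonneg hR0.le n1M
  have nn5 : (0:ℝ) ≤ (1-πR)*πM := mul_nonneg n1R hM0.le
  have ev0 : v 0 = πRb*πMb := rfl
  have ev1 : v 1 = πRb*(1-πMb) := rfl
  have ev2 : v 2 = (1-πRb)*πMb := rfl
  have ev3 : v 3 = πR*πM := rfl
  have ev4 : v 4 = πR*(1-πM) := rfl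
  have ev5 : v 5 = (1-πR)*πM := rfl
  have hvnn : ∀ i, 0 ≤ v i := by
    intro i
    fin_cases i
    · exact nn0
    · exact nn1
    · exact nn2
    · exact nn3
    · exact nn4
    · exact nn5
  set P : Measure (Fin 6) :=
    ∑ i : Fin 6, (ENNReal.ofReal (v i)) • Measure.dirac i with hP
  -- measure of a set
  have Papp : ∀ A : Set (Fin 6),
      P A = ∑ i : Fin 6, ENNReal.ofReal (v i) * A.indicator 1 i := by
    intro A
    rw [hP, Measure.coe_finset_sum, Finset.sum_apply]
    refine Finset.sum_congr rfl fun i _ => ?_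
    rw [Measure.smul_apply, Measure.dirac_apply, smul_eq_mul]
  -- integral of a function
  have Pint : ∀ f : Fin 6 → ℝ, ∫ ω, f ω ∂P = ∑ i : Fin 6, v i * f i := by
    intro f
    rw [hP, integral_finset_sum_measure (fun i _ =>
      (Integrable.of_finite (μ := Measure.dirac i) (f := f)).smul_measure
        ENNReal.ofReal_ne_top)]
    refine Finset.sum_congr rfl fun i _ => ?_
    rw [integral_smul_measure, integral_dirac, smul_eq_mul,
      ENNReal.toReal_ofReal (hvnn i)]
  have hProb : IsProbabilityMeasure P := by
    constructor
    rw [Papp, Fin.sum_univ_six]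
    simp only [Set.indicator_univ, Pi.one_apply, mul_one, ev0, ev1, ev2, ev3, ev4, ev5]
    rw [← ENNReal.ofReal_add (by linarith [nn0, nn1, nn2, nn3, nn4, nn5]) (by linarith [nn0, nn1, nn2, nn3, nn4, nn5]),
        ← ENNReal.ofReal_add (by linarith [nn0, nn1, nn2, nn3, nn4, nn5]) (by linarith [nn0, nn1, nn2, nn3, nn4, nn5]),
        ← ENNReal.ofReal_add (by linarith [nn0, nn1, nn2, nn3, nn4, nn5]) (by linarith [nn0, nn1, nn2, nn3, nn4, nn5]),
        ← ENNReal.ofReal_add (by linarith [nn0, nn1, nn2, nn3, nn4, nn5]) (by linarith [nn0, nn1, nn2, nn3, nn4, nn5]),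
        ← ENNReal.ofReal_add (by linarith [nn0, nn1, nn2, nn3, nn4, nn5]) (by linarith [nn0, nn1, nn2, nn3, nn4, nn5])]
    have : πRb*πMb + πRb*(1-πMb) + (1-πRb)*πMb + πR*πM + πR*(1-πM) + (1-πR)*πM
        = (1 - πT) + πT := by linarith [hrel, hrelb]
    rw [this]
    norm_num
  set Tf : Fin 6 → ℝ := ![0,0,0,1,1,1] with hTf
  set Rf : Fin 6 → ℝ := ![0,0,0,1,1,0] with hRf
  set Mf : Fin 6 → ℝ := ![0,0,0,1,0,1] with hMf
  set Rbf : Fin 6 → ℝ := ![1,1,0,0,0,0] with hRbf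
  set Mbf : Fin 6 → ℝ := ![1,0,1,0,0,0] with hMbf
  have eT0 : Tf 0 = 0 := rfl
  have eT1 : Tf 1 = 0 := rfl
  have eT2 : Tf 2 = 0 := rfl
  have eT3 : Tf 3 = 1 := rfl
  have eT4 : Tf 4 = 1 := rfl
  have eT5 : Tf 5 = 1 := rfl
  have eR0 : Rf 0 = 0 := rfl
  have eR1 : Rf 1 = 0 := rfl
  have eR2 : Rf 2 = 0 := rfl
  have eR3 : Rf 3 = 1 := rfl
  have eR4 : Rf 4 = 1 := rfl
  have eR5 : Rf 5 = 0 := rfl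
  have eM0 : Mf 0 = 0 := rfl
  have eM1 : Mf 1 = 0 := rfl
  have eM2 : Mf 2 = 0 := rfl
  have eM3 : Mf 3 = 1 := rfl
  have eM4 : Mf 4 = 0 := rfl
  have eM5 : Mf 5 = 1 := rfl
  have eRb0 : Rbf 0 = 1 := rfl
  have eRb1 : Rbf 1 = 1 := rfl
  have eRb2 : Rbf 2 = 0 := rfl
  have eRb3 : Rbf 3 = 0 := rfl
  have eRb4 : Rbf 4 = 0 := rfl
  have eRb5 : Rbf 5 = 0 := rfl
  have eMb0 : Mbf 0 = 1 := rfl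
  have eMb1 : Mbf 1 = 0 := rfl
  have eMb2 : Mbf 2 = 1 := rfl
  have eMb3 : Mbf 3 = 0 := rfl
  have eMb4 : Mbf 4 = 0 := rfl
  have eMb5 : Mbf 5 = 0 := rfl
  -- the five marginal probabilities
  have hPT : P {ω | Tf ω = 1} = ENNReal.ofReal πT := by
    rw [Papp, Fin.sum_univ_six]
    simp only [Set.indicator_apply, Set.mem_setOf_eq, eT0, eT1, eT2, eT3, eT4, eT5,
      ev0, ev1, ev2, ev3, ev4, ev5]
    norm_num
    rw [← ENNReal.ofReal_add (by linarith [nn0, nn1, nn2, nn3, nn4, nn5]) (by linarith [nn0, nn1, nn2, nn3, nn4, nn5]),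
        ← ENNReal.ofReal_add (by linarith [nn0, nn1, nn2, nn3, nn4, nn5]) (by linarith [nn0, nn1, nn2, nn3, nn4, nn5])]
    congr 1; linarith [hrel]
  have hPR : P {ω | Rf ω = 1} = ENNReal.ofReal πR := by
    rw [Papp, Fin.sum_univ_six]
    simp only [Set.indicator_apply, Set.mem_setOf_eq, eR0, eR1, eR2, eR3, eR4, eR5,
      ev0, ev1, ev2, ev3, ev4, ev5]
    norm_num
    rw [← ENNReal.ofReal_add (by linarith [nn0, nn1, nn2, nn3, nn4, nn5]) (by linarith [nn0, nn1, nn2, nn3, nn4, nn5])]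
    congr 1; ring
  have hPM : P {ω | Mf ω = 1} = ENNReal.ofReal πM := by
    rw [Papp, Fin.sum_univ_six]
    simp only [Set.indicator_apply, Set.mem_setOf_eq, eM0, eM1, eM2, eM3, eM4, eM5,
      ev0, ev1, ev2, ev3, ev4, ev5]
    norm_num
    rw [← ENNReal.ofReal_add (by linarith [nn0, nn1, nn2, nn3, nn4, nn5]) (by linarith [nn0, nn1, nn2, nn3, nn4, nn5])]
    congr 1; ring
  have hPRb : P {ω | Rbf ω = 1} = ENNReal.ofReal πRb := by
    rw [Papp, Fin.sum_univ_six]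
    simp only [Set.indicator_apply, Set.mem_setOf_eq, eRb0, eRb1, eRb2, eRb3, eRb4, eRb5,
      ev0, ev1, ev2, ev3, ev4, ev5]
    norm_num
    rw [← ENNReal.ofReal_add (by linarith [nn0, nn1, nn2, nn3, nn4, nn5]) (by linarith [nn0, nn1, nn2, nn3, nn4, nn5])]
    congr 1; ring
  have hPMb : P {ω | Mbf ω = 1} = ENNReal.ofReal πMb := by
    rw [Papp, Fin.sum_univ_six]
    simp only [Set.indicator_apply, Set.mem_setOf_eq, eMb0, eMb1, eMb2, eMb3, eMb4, eMb5,
      ev0, ev1, ev2, ev3, ev4, ev5]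
    norm_num
    rw [← ENNReal.ofReal_add (by linarith [nn0, nn1, nn2, nn3, nn4, nn5]) (by linarith [nn0, nn1, nn2, nn3, nn4, nn5])]
    congr 1; ring
  -- 0/1 valued
  have hT01 : ∀ ω, Tf ω = 0 ∨ Tf ω = 1 := by
    intro ω; fin_cases ω <;>
      simp only [eT0, eT1, eT2, eT3, eT4, eT5] <;> [left; left; left; right; right; right] <;> rfl
  have hR01 : ∀ ω, Rf ω = 0 ∨ Rf ω = 1 := by
    intro ω; fin_cases ω <;>
      simp only [eR0, eR1, eR2, eR3, eR4, eR5] <;> [left; left; left; right; right; left] <;> rfl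
  have hM01 : ∀ ω, Mf ω = 0 ∨ Mf ω = 1 := by
    intro ω; fin_cases ω <;>
      simp only [eM0, eM1, eM2, eM3, eM4, eM5] <;> [left; left; left; right; left; right] <;> rfl
  have hRb01 : ∀ ω, Rbf ω = 0 ∨ Rbf ω = 1 := by
    intro ω; fin_cases ω <;>
      simp only [eRb0, eRb1, eRb2, eRb3, eRb4, eRb5] <;>
      [right; right; left; left; left; left] <;> rfl
  have hMb01 : ∀ ω, Mbf ω = 0 ∨ Mbf ω = 1 := by
    intro ω; fin_cases ω <;>
      simp only [eMb0, eMb1, eMb2, eMb3, eMb4, eMb5] <;>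
      [right; left; right; left; left; left] <;> rfl
  -- independence of (R, M)
  have hIndRM : IndepFun Rf Mf P := by
    refine bernoulli_indepFun P Rf Mf hR01 hM01 trivial trivial ?_
    rw [hPR, hPM, Papp, Fin.sum_univ_six]
    simp only [Set.indicator_apply, Set.mem_inter_iff, Set.mem_setOf_eq,
      eR0, eR1, eR2, eR3, eR4, eR5, eM0, eM1, eM2, eM3, eM4, eM5,
      ev0, ev1, ev2, ev3, ev4, ev5]
    norm_num
    rw [← ENNReal.ofReal_mul (le_of_lt hR0)]
  have hIndRbMb : IndepFun Rbf Mbf P := by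
    refine bernoulli_indepFun P Rbf Mbf hRb01 hMb01 trivial trivial ?_
    rw [hPRb, hPMb, Papp, Fin.sum_univ_six]
    simp only [Set.indicator_apply, Set.mem_inter_iff, Set.mem_setOf_eq,
      eRb0, eRb1, eRb2, eRb3, eRb4, eRb5, eMb0, eMb1, eMb2, eMb3, eMb4, eMb5,
      ev0, ev1, ev2, ev3, ev4, ev5]
    norm_num
    rw [← ENNReal.ofReal_mul (le_of_lt hRb0)]
  refine ⟨Fin 6, inferInstance, P, hProb, Tf, Rf, Mf, Rbf, Mbf,
    (fun _ _ => trivial), (fun _ _ => trivial), (fun _ _ => trivial),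
    (fun _ _ => trivial), (fun _ _ => trivial),
    hT01, hR01, hM01, hRb01, hMb01, hPT, hIndRM, hPR, hPM, hIndRbMb, hPRb, hPMb, ?_, ?_⟩
  · -- (c)
    refine Filter.Eventually.of_forall fun ω => ?_
    fin_cases ω
    · exact ⟨by show max (0:ℝ) 0 ≤ 0; norm_num, by show max (1:ℝ) 1 ≤ 1 - 0; norm_num⟩
    · exact ⟨by show max (0:ℝ) 0 ≤ 0; norm_num, by show max (1:ℝ) 0 ≤ 1 - 0; norm_num⟩
    · exact ⟨by show max (0:ℝ) 0 ≤ 0; norm_num, by show max (0:ℝ) 1 ≤ 1 - 0; norm_num⟩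
    · exact ⟨by show max (1:ℝ) 1 ≤ 1; norm_num, by show max (0:ℝ) 0 ≤ 1 - 1; norm_num⟩
    · exact ⟨by show max (1:ℝ) 0 ≤ 1; norm_num, by show max (0:ℝ) 0 ≤ 1 - 1; norm_num⟩
    · exact ⟨by show max (0:ℝ) 1 ≤ 1; norm_num, by show max (0:ℝ) 0 ≤ 1 - 1; norm_num⟩
  · -- (d)
    rw [Pint (fun ω => Mf ω * Mbf ω), Pint Mf, Pint Mbf, Fin.sum_univ_six,
      Fin.sum_univ_six, Fin.sum_univ_six]
    simp only [eM0, eM1, eM2, eM3, eM4, eM5, eMb0, eMb1, eMb2, eMb3, eMb4, eMb5,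
      ev0, ev1, ev2, ev3, ev4, ev5]
    ring
end

section
/- The difference-in-means estimator is unbiased for the average treatment effect, E[τ̂_DIM] = τ*, and its n-rescaled mean-squared error equals n·E[(τ̂_DIM − τ*)²] = (1/n)·Σ_{i=1}^n { ((1 − π_T)/π_T)·y_i(1)² + (π_T/(1 − π_T))·y_i(0)² + 2·y_i(1)·y_i(0) }. -/
/-!
On `{0, 1}`-valued treatments the observed outcome satisfies `Y i * T i = y1 i * T i` and
`Y i * (1 - T i) = y0 i * (1 - T i)`, so `τ̂ - τ* = ∑ i, c i * (T i - π)` with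
`c i = (y1 i / π + y0 i / (1 - π)) / n`. The centred treatments have mean zero, which gives
unbiasedness, and are independent with variance `π (1 - π)`, so the mean-squared error is
`π (1 - π) ∑ i, c i ^ 2`; expanding the square gives the stated sum.
-/

open MeasureTheory ProbabilityTheory

section Bernoulli

variable {Ω : Type*} [MeasurableSpace Ω] {P : Measure Ω}

structure IsBernoulliIndicator (T : Ω → ℝ) (p : ℝ) (P : Measure Ω) : Prop where
  measurable : Measurable T
  eq_zero_or_eq_one : ∀ ω, T ω = 0 ∨ T ω = 1
  measure_eq_one : P {ω | T ω = 1} = ENNReal.ofReal p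

namespace IsBernoulliIndicator

variable {T : Ω → ℝ} {p : ℝ}

lemma memLp [IsFiniteMeasure P] (hT : IsBernoulliIndicator T p P) (q : ENNReal) :
    MemLp T q P :=
  memLp_of_bounded (a := 0) (b := 1)
    (.of_forall fun ω ↦ by rcases hT.eq_zero_or_eq_one ω with h | h <;> simp [h])
    hT.measurable.aestronglyMeasurable q

lemma integral_eq (hT : IsBernoulliIndicator T p P) (hp : 0 ≤ p) : ∫ ω, T ω ∂P = p := by
  have hind : T = {ω | T ω = 1}.indicator 1 := by
    funext ω
    rcases hT.eq_zero_or_eq_one ω with h | h <;> simp [h]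
  rw [hind, integral_indicator_one (s := {ω | T ω = 1})
      (hT.measurable (measurableSet_singleton 1)),
    measureReal_def, hT.measure_eq_one, ENNReal.toReal_ofReal hp]

lemma variance_eq [IsProbabilityMeasure P] (hT : IsBernoulliIndicator T p P) (hp : 0 ≤ p) :
    Var[T; P] = p * (1 - p) := by
  have hsq : T ^ 2 = T := by
    funext ω
    rcases hT.eq_zero_or_eq_one ω with h | h <;> simp [h]
  rw [variance_eq_sub (hT.memLp 2), hsq, hT.integral_eq hp]
  ring

end IsBernoulliIndicator

variable [IsProbabilityMeasure P] {ι : Type*} [Fintype ι] {T : ι → Ω → ℝ} {p : ℝ}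

lemma integral_const_add_sum_mul_sub (hT : ∀ i, IsBernoulliIndicator (T i) p P) (hp : 0 ≤ p)
    (a : ℝ) (c : ι → ℝ) :
    ∫ ω, a + ∑ i, c i * (T i ω - p) ∂P = a := by
  have hint : ∀ i, Integrable (fun ω ↦ c i * (T i ω - p)) P := fun i ↦
    ((((hT i).memLp 1).integrable le_rfl).sub (integrable_const p)).const_mul (c i)
  rw [integral_add (integrable_const a) (integrable_finsetSum _ fun i _ ↦ hint i),
    integral_finsetSum _ fun i _ ↦ hint i, integral_const, probReal_univ, one_smul,
    add_eq_left]
  refine Finset.sum_eq_zero fun i _ ↦ ?_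
  rw [integral_const_mul, integral_sub (((hT i).memLp 1).integrable le_rfl) (integrable_const p),
    (hT i).integral_eq hp, integral_const, probReal_univ, one_smul, sub_self, mul_zero]

lemma integral_sum_mul_sub_sq (hT : ∀ i, IsBernoulliIndicator (T i) p P) (hp : 0 ≤ p)
    (hind : iIndepFun T P) (c : ι → ℝ) :
    ∫ ω, (∑ i, c i * (T i ω - p)) ^ 2 ∂P = p * (1 - p) * ∑ i, c i ^ 2 := by
  set X : ι → Ω → ℝ := fun i ω ↦ c i * (T i ω - p)
  have hXL : ∀ i, MemLp (X i) 2 P := fun i ↦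
    (((hT i).memLp 2).sub (memLp_const p)).const_mul (c i)
  have hXind : iIndepFun X P :=
    hind.comp (fun i x ↦ c i * (x - p)) fun i ↦ (measurable_id.sub_const p).const_mul (c i)
  have hmean : ∫ ω, ∑ i, X i ω ∂P = 0 := by
    simpa using integral_const_add_sum_mul_sub hT hp 0 c
  have hsum : (∑ i, X i) = fun ω ↦ ∑ i, X i ω := by
    funext ω
    simp
  rw [← variance_of_integral_eq_zero
      (Finset.aemeasurable_fun_sum _ fun i _ ↦ (hXL i).aemeasurable) hmean, ← hsum,
    IndepFun.variance_sum (fun i _ ↦ hXL i) fun i _ j _ hij ↦ hXind.indepFun hij,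
    Finset.mul_sum]
  refine Finset.sum_congr rfl fun i _ ↦ ?_
  rw [variance_const_mul, variance_sub_const (hT i).measurable.aestronglyMeasurable,
    (hT i).variance_eq hp]
  ring

end Bernoulli

lemma ite_eq_one_mul_of_eq_zero_or_eq_one {t : ℝ} (ht : t = 0 ∨ t = 1) (a b : ℝ) :
    (if t = 1 then a else b) * t = a * t ∧
      (if t = 1 then a else b) * (1 - t) = b * (1 - t) := by
  rcases ht with rfl | rfl <;> simp

lemma dim_eq_ate_add_sum {ι : Type*} [Fintype ι] {n π : ℝ} (hπ0 : π ≠ 0) (hπ1 : 1 - π ≠ 0)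
    (y1 y0 t : ι → ℝ) :
    1 / (n * π) * ∑ i, y1 i * t i - 1 / (n * (1 - π)) * ∑ i, y0 i * (1 - t i)
      = 1 / n * ∑ i, (y1 i - y0 i) + ∑ i, (y1 i / π + y0 i / (1 - π)) / n * (t i - π) := by
  simp only [Finset.mul_sum, ← Finset.sum_sub_distrib, ← Finset.sum_add_distrib]
  refine Finset.sum_congr rfl fun i _ ↦ ?_
  field_simp
  ring

/-- the difference-in-means estimator is unbiased for the ATE, and its
`n`-rescaled mean-squared error has the stated exact expression. -/
theorem dim_unbiased_and_mse
    {Ω : Type*} [MeasurableSpace Ω] (P : Measure Ω) [IsProbabilityMeasure P]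
    (n : ℕ) (hn : 0 < n) (πT : ℝ) (hπT : πT ∈ Set.Ioo (0 : ℝ) 1)
    (y1 y0 : Fin n → ℝ) (T : Fin n → Ω → ℝ)
    (hTmeas : ∀ i, Measurable (T i))
    (hT01 : ∀ i ω, T i ω = 0 ∨ T i ω = 1)
    (hTber : ∀ i, P {ω | T i ω = 1} = ENNReal.ofReal πT)
    (hTindep : iIndepFun T P)
    (Y : Fin n → Ω → ℝ)
    (hY : ∀ i ω, Y i ω = if T i ω = 1 then y1 i else y0 i)
    (τstar : ℝ) (hτstar : τstar = (1 / (n : ℝ)) * ∑ i, (y1 i - y0 i))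
    (τhat : Ω → ℝ)
    (hτhat : ∀ ω, τhat ω =
      (1 / ((n : ℝ) * πT)) * ∑ i, Y i ω * T i ω
        - (1 / ((n : ℝ) * (1 - πT))) * ∑ i, Y i ω * (1 - T i ω)) :
    (∫ ω, τhat ω ∂P = τstar) ∧
      (n : ℝ) * ∫ ω, (τhat ω - τstar) ^ 2 ∂P
        = (1 / (n : ℝ)) * ∑ i,
            ((1 - πT) / πT * (y1 i) ^ 2 + πT / (1 - πT) * (y0 i) ^ 2
              + 2 * y1 i * y0 i) := by
  obtain ⟨hπ0, hπ1⟩ := hπT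
  have hB : ∀ i, IsBernoulliIndicator (T i) πT P := fun i ↦ ⟨hTmeas i, hT01 i, hTber i⟩
  set c : Fin n → ℝ := fun i ↦ (y1 i / πT + y0 i / (1 - πT)) / n
  have herr : ∀ ω, τhat ω = τstar + ∑ i, c i * (T i ω - πT) := fun ω ↦ by
    rw [hτhat, hτstar, ← dim_eq_ate_add_sum hπ0.ne' (sub_ne_zero.2 hπ1.ne')]
    simp only [hY, (ite_eq_one_mul_of_eq_zero_or_eq_one (hT01 _ ω) _ _).1,
      (ite_eq_one_mul_of_eq_zero_or_eq_one (hT01 _ ω) _ _).2]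
  constructor
  · simp_rw [herr]
    exact integral_const_add_sum_mul_sub hB hπ0.le τstar c
  · have hn' : (n : ℝ) ≠ 0 := Nat.cast_ne_zero.2 hn.ne'
    simp_rw [herr, add_sub_cancel_left, integral_sum_mul_sub_sq hB hπ0.le hTindep c,
      Finset.mul_sum]
    refine Finset.sum_congr rfl fun i _ ↦ ?_
    simp only [c]
    field_simp
    ring
end

section
/- The oracle regression-adjusted estimator is unbiased, E[τ̂_adj.oracle] = τ*, and its n-rescaled mean-squared error equals n·E[(τ̂_adj.oracle − τ*)²] = (1/n)·Σ_{i=1}^n { ((1 − π_T)/π_T)·Δ_i(1)² + (π_T/(1 − π_T))·Δ_i(0)² + 2·Δ_i(1)·Δ_i(0) }. -/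
open MeasureTheory ProbabilityTheory
open scoped BigOperators ENNReal

/-!
Writing `c i = Δ1 i / πT + Δ0 i / (1 - πT)`, checking the two cases `T i = 0, 1` shows that the
estimator is exactly `τstar + (1/n) ∑ i, c i * (T i - πT)`: a constant plus a weighted sum of
independent centred Bernoulli variables. Its mean is therefore `τstar`, and its mean-squared error
is the variance of that sum, `(1/n²) ∑ i, c i ^ 2 * πT * (1 - πT)`, which expands to the stated
formula.
-/

lemma iIndepFun.variance_fun_sum_const_mul {Ω ι : Type*} [MeasurableSpace Ω] {P : Measure Ω}
    [Fintype ι] {X : ι → Ω → ℝ} (hX : ∀ i, MemLp (X i) 2 P) (hind : iIndepFun X P)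
    (c : ι → ℝ) : Var[fun ω => ∑ i, c i * X i ω; P] = ∑ i, c i ^ 2 * Var[X i; P] := by
  have hsum : (fun ω => ∑ i, c i * X i ω) = ∑ i, fun ω => c i * X i ω := by
    funext ω
    simp
  rw [hsum, IndepFun.variance_sum (fun i _ => (hX i).const_mul (c i))]
  · simp only [variance_const_mul]
  · intro i _ j _ hij
    exact (hind.indepFun hij).comp (measurable_const_mul (c i)) (measurable_const_mul (c j))

section ZeroOneValued

variable {Ω : Type*} [MeasurableSpace Ω] {P : Measure Ω}

section

variable {X : Ω → ℝ}

lemma memLp_of_forall_eq_zero_or_one [IsFiniteMeasure P] (hX : Measurable X)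
    (h01 : ∀ ω, X ω = 0 ∨ X ω = 1) (q : ℝ≥0∞) : MemLp X q P :=
  .of_bound hX.aestronglyMeasurable 1 <| ae_of_all _ fun ω => by
    rcases h01 ω with h | h <;> simp [h]

lemma integrable_of_forall_eq_zero_or_one [IsFiniteMeasure P] (hX : Measurable X)
    (h01 : ∀ ω, X ω = 0 ∨ X ω = 1) : Integrable X P :=
  memLp_one_iff_integrable.mp (memLp_of_forall_eq_zero_or_one hX h01 1)

lemma integral_eq_measureReal_of_forall_eq_zero_or_one (hX : Measurable X)
    (h01 : ∀ ω, X ω = 0 ∨ X ω = 1) : ∫ ω, X ω ∂P = P.real {ω | X ω = 1} := by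
  calc ∫ ω, X ω ∂P = ∫ ω, {ω | X ω = 1}.indicator (fun _ => (1 : ℝ)) ω ∂P := by
        congr 1
        funext ω
        rcases h01 ω with h | h <;> simp [h]
    _ = P.real {ω | X ω = 1} := by
        rw [integral_indicator_const _ (show MeasurableSet {ω | X ω = 1} from
          hX (measurableSet_singleton 1)), smul_eq_mul, mul_one]

lemma variance_of_forall_eq_zero_or_one [IsProbabilityMeasure P] (hX : Measurable X)
    (h01 : ∀ ω, X ω = 0 ∨ X ω = 1) :
    Var[X; P] = P.real {ω | X ω = 1} * (1 - P.real {ω | X ω = 1}) := by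
  have hsq : X ^ 2 = X := by
    funext ω
    rcases h01 ω with h | h <;> simp [h]
  rw [variance_eq_sub (memLp_of_forall_eq_zero_or_one hX h01 2), hsq,
    integral_eq_measureReal_of_forall_eq_zero_or_one hX h01]
  ring

end

variable [IsProbabilityMeasure P] {ι : Type*} [Fintype ι] {X : ι → Ω → ℝ} {p : ℝ}

lemma integral_sum_mul_sub_eq_zero_of_forall_eq_zero_or_one (hX : ∀ i, Measurable (X i))
    (h01 : ∀ i ω, X i ω = 0 ∨ X i ω = 1) (hp : ∀ i, P.real {ω | X i ω = 1} = p)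
    (b : ι → ℝ) : ∫ ω, ∑ i, b i * (X i ω - p) ∂P = 0 := by
  rw [integral_finsetSum (f := fun i ω => b i * (X i ω - p)) _ fun i _ =>
    ((integrable_of_forall_eq_zero_or_one (hX i) (h01 i)).sub (integrable_const p)).const_mul (b i)]
  refine Finset.sum_eq_zero fun i _ => ?_
  rw [integral_const_mul,
    integral_sub (integrable_of_forall_eq_zero_or_one (hX i) (h01 i)) (integrable_const p),
    integral_eq_measureReal_of_forall_eq_zero_or_one (hX i) (h01 i), hp]
  simp

lemma integral_sq_sum_mul_sub_of_iIndepFun (hX : ∀ i, Measurable (X i))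
    (h01 : ∀ i ω, X i ω = 0 ∨ X i ω = 1) (hp : ∀ i, P.real {ω | X i ω = 1} = p)
    (hind : iIndepFun X P) (b : ι → ℝ) :
    ∫ ω, (∑ i, b i * (X i ω - p)) ^ 2 ∂P = p * (1 - p) * ∑ i, b i ^ 2 := by
  have hshift :
      (fun ω => ∑ i, b i * (X i ω - p)) = fun ω => ∑ i, b i * X i ω - ∑ i, b i * p := by
    funext ω
    simp only [mul_sub, Finset.sum_sub_distrib]
  rw [← variance_of_integral_eq_zero (by fun_prop)
      (integral_sum_mul_sub_eq_zero_of_forall_eq_zero_or_one hX h01 hp b), hshift,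
    variance_sub_const (by fun_prop),
    iIndepFun.variance_fun_sum_const_mul
      (fun i => memLp_of_forall_eq_zero_or_one (hX i) (h01 i) 2) hind]
  simp only [variance_of_forall_eq_zero_or_one (hX _) (h01 _), hp, Finset.mul_sum]
  exact Finset.sum_congr rfl fun i _ => by ring

end ZeroOneValued

lemma regAdjusted_eq_ate_add_sum_mul_sub {ι : Type*} [Fintype ι] {p : ℝ} (hp0 : p ≠ 0)
    (hp1 : 1 - p ≠ 0) (n : ℝ) {t : ι → ℝ} (ht : ∀ i, t i = 0 ∨ t i = 1)
    (y1 y0 g1 g0 : ι → ℝ) :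
    1 / (n * p) * ∑ i, ((if t i = 1 then y1 i else y0 i) - g1 i) * t i
        - 1 / (n * (1 - p)) * ∑ i, ((if t i = 1 then y1 i else y0 i) - g0 i) * (1 - t i)
        + 1 / n * ∑ i, (g1 i - g0 i)
      = 1 / n * ∑ i, (y1 i - y0 i)
        + ∑ i, ((y1 i - g1 i) / p + (y0 i - g0 i) / (1 - p)) / n * (t i - p) := by
  simp only [Finset.mul_sum, ← Finset.sum_sub_distrib, ← Finset.sum_add_distrib]
  refine Finset.sum_congr rfl fun i _ => ?_
  rcases ht i with h | h <;> simp only [h, zero_ne_one, if_true, if_false] <;>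
    field_simp <;> ring

theorem oracle_regadj_unbiased_and_mse_general
    {Ω : Type*} [MeasurableSpace Ω] (P : Measure Ω) [IsProbabilityMeasure P]
    (n d : ℕ) (πT : ℝ) (hπT : πT ∈ Set.Ioo (0 : ℝ) 1)
    (y1 y0 : Fin n → ℝ) (x : Fin n → Fin d → ℝ)
    (f1 f0 : (Fin d → ℝ) → ℝ)
    (T : Fin n → Ω → ℝ)
    (hTmeas : ∀ i, Measurable (T i))
    (hT01 : ∀ i ω, T i ω = 0 ∨ T i ω = 1)
    (hTber : ∀ i, P {ω | T i ω = 1} = ENNReal.ofReal πT)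
    (hTindep : iIndepFun T P)
    (Y : Fin n → Ω → ℝ)
    (hY : ∀ i ω, Y i ω = if T i ω = 1 then y1 i else y0 i)
    (Δ1 Δ0 : Fin n → ℝ)
    (hΔ1 : ∀ i, Δ1 i = y1 i - f1 (x i)) (hΔ0 : ∀ i, Δ0 i = y0 i - f0 (x i))
    (τstar : ℝ) (hτstar : τstar = (1 / (n : ℝ)) * ∑ i, (y1 i - y0 i))
    (τhat : Ω → ℝ)
    (hτhat : ∀ ω, τhat ω =
      (1 / ((n : ℝ) * πT)) * ∑ i, (Y i ω - f1 (x i)) * T i ω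
        - (1 / ((n : ℝ) * (1 - πT))) * ∑ i, (Y i ω - f0 (x i)) * (1 - T i ω)
        + (1 / (n : ℝ)) * ∑ i, (f1 (x i) - f0 (x i))) :
    (∫ ω, τhat ω ∂P = τstar) ∧
      (n : ℝ) * ∫ ω, (τhat ω - τstar) ^ 2 ∂P
        = (1 / (n : ℝ)) * ∑ i,
            ((1 - πT) / πT * (Δ1 i) ^ 2 + πT / (1 - πT) * (Δ0 i) ^ 2
              + 2 * Δ1 i * Δ0 i) := by
  obtain ⟨hπ0, hπ1⟩ := hπT
  have hπ1' : 1 - πT ≠ 0 := by linarith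
  have hp : ∀ i, P.real {ω | T i ω = 1} = πT := fun i => by
    rw [measureReal_def, hTber i, ENNReal.toReal_ofReal hπ0.le]
  set c : Fin n → ℝ := fun i => (Δ1 i / πT + Δ0 i / (1 - πT)) / n with hc
  have hdev : ∀ ω, τhat ω = τstar + ∑ i, c i * (T i ω - πT) := fun ω => by
    simp only [hτhat, hτstar, hY, hc, hΔ1, hΔ0]
    exact regAdjusted_eq_ate_add_sum_mul_sub hπ0.ne' hπ1' _ (hT01 · ω) _ _ _ _
  have hmean := integral_sum_mul_sub_eq_zero_of_forall_eq_zero_or_one hTmeas hT01 hp c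
  have hsq := integral_sq_sum_mul_sub_of_iIndepFun hTmeas hT01 hp hTindep c
  have hTint : ∀ i, Integrable (T i) P := fun i =>
    integrable_of_forall_eq_zero_or_one (hTmeas i) (hT01 i)
  refine ⟨?_, ?_⟩
  · simp only [hdev]
    rw [integral_add (integrable_const _) (by fun_prop), hmean]
    simp
  · simp only [hdev, add_sub_cancel_left]
    rw [hsq, Finset.mul_sum, Finset.mul_sum, Finset.mul_sum]
    refine Finset.sum_congr rfl fun i _ => ?_
    simp only [hc]
    rcases eq_or_ne (n : ℝ) 0 with hn | hn
    · simp [hn]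
    · field_simp
      ring

/-- the oracle regression-adjusted estimator is unbiased for the ATE, and
its `n`-rescaled mean-squared error has the stated exact expression in terms of the
residuals `Δ_i(t) = y_i(t) − f*_t(x_i)`. -/
theorem oracle_regadj_unbiased_and_mse
    {Ω : Type*} [MeasurableSpace Ω] (P : Measure Ω) [IsProbabilityMeasure P]
    (n d : ℕ) (hn : 0 < n) (πT : ℝ) (hπT : πT ∈ Set.Ioo (0 : ℝ) 1)
    (y1 y0 : Fin n → ℝ) (x : Fin n → Fin d → ℝ)
    (f1 f0 : (Fin d → ℝ) → ℝ)
    (T : Fin n → Ω → ℝ)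
    (hTmeas : ∀ i, Measurable (T i))
    (hT01 : ∀ i ω, T i ω = 0 ∨ T i ω = 1)
    (hTber : ∀ i, P {ω | T i ω = 1} = ENNReal.ofReal πT)
    (hTindep : iIndepFun T P)
    (Y : Fin n → Ω → ℝ)
    (hY : ∀ i ω, Y i ω = if T i ω = 1 then y1 i else y0 i)
    (Δ1 Δ0 : Fin n → ℝ)
    (hΔ1 : ∀ i, Δ1 i = y1 i - f1 (x i)) (hΔ0 : ∀ i, Δ0 i = y0 i - f0 (x i))
    (τstar : ℝ) (hτstar : τstar = (1 / (n : ℝ)) * ∑ i, (y1 i - y0 i))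
    (τhat : Ω → ℝ)
    (hτhat : ∀ ω, τhat ω =
      (1 / ((n : ℝ) * πT)) * ∑ i, (Y i ω - f1 (x i)) * T i ω
        - (1 / ((n : ℝ) * (1 - πT))) * ∑ i, (Y i ω - f0 (x i)) * (1 - T i ω)
        + (1 / (n : ℝ)) * ∑ i, (f1 (x i) - f0 (x i))) :
    (∫ ω, τhat ω ∂P = τstar) ∧
      (n : ℝ) * ∫ ω, (τhat ω - τstar) ^ 2 ∂P
        = (1 / (n : ℝ)) * ∑ i,
            ((1 - πT) / πT * (Δ1 i) ^ 2 + πT / (1 - πT) * (Δ0 i) ^ 2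
              + 2 * Δ1 i * Δ0 i) :=
  oracle_regadj_unbiased_and_mse_general P n d πT hπT y1 y0 x f1 f0 T hTmeas hT01 hTber hTindep Y hY
    Δ1 Δ0 hΔ1 hΔ0 τstar hτstar τhat hτhat
end

section
/- Suppose that for every δ' ∈ (0,1) the function estimates satisfy P(‖f̂_R − f*_1‖_n ≤ ε₁(π_R, δ')) ≥ 1 − δ' and P(‖f̂_R̄ − f*_0‖_n ≤ ε₀(π_R̄, δ')) ≥ 1 − δ', where ‖f̂ − f*‖_n² = (1/n)·Σ_i (f̂(x_i) − f*(x_i))². Then for any δ ∈ (0,1), with probability at least 1 − δ, √n·|τ̂_dc − τ̂_dc.oracle| ≤ { ε₁(π_R, δ/4)/π_M + ε₀(π_R̄, δ/4)/π_M̄ }·√(log(4/δ)). -/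
open MeasureTheory ProbabilityTheory
open scoped BigOperators

/-! The two estimators differ by
`(1/(n π_M̄)) Σᵢ (f̂_R̄ - f*₀)(xᵢ) (M̄ᵢ - π_M̄) - (1/(n π_M)) Σᵢ (f̂_R - f*₁)(xᵢ) (Mᵢ - π_M)`.
Conditionally on `f̂_R`, which is independent of the `Mᵢ`, the second sum is a weighted sum of
independent centred Bernoulli variables, so Hoeffding's inequality bounds it by
`√n ‖f̂_R - f*₁‖_n √(log (4/δ))` outside an event of probability `2 (δ/4)² = δ²/8`; likewise for
the first sum. Together with the two events `‖f̂ - f*‖_n > ε(·, δ/4)` of probability `δ/4` each,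
a union bound leaves an exceptional probability `δ/2 + δ²/4 ≤ δ`. -/

open Real

noncomputable def empiricalNorm {n : ℕ} (v : Fin n → ℝ) : ℝ :=
  √((1 / (n : ℝ)) * ∑ i, v i ^ 2)

lemma sum_sq_le_of_empiricalNorm_le {n : ℕ} {v : Fin n → ℝ} {e : ℝ}
    (h : empiricalNorm v ≤ e) : ∑ i, v i ^ 2 ≤ n * e ^ 2 := by
  rcases Nat.eq_zero_or_pos n with rfl | hn
  · simp
  have hmean := (sqrt_le_iff.mp h).2
  rwa [one_div, inv_mul_le_iff₀ (by exact_mod_cast hn)] at hmean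

/-- `τ̂_dc` with fitted values `g1, g0` at the design points; the oracle has `gₖ i = f*ₖ (xᵢ)`. -/
noncomputable def dcEstimator {n : ℕ} (πM πMb : ℝ) (Y M Mb g1 g0 : Fin n → ℝ) : ℝ :=
  (1 / ((n : ℝ) * πM)) * ∑ i, (Y i - g1 i) * M i
    - (1 / ((n : ℝ) * πMb)) * ∑ i, (Y i - g0 i) * Mb i
    + (1 / (n : ℝ)) * ∑ i, (g1 i - g0 i)

lemma dcEstimator_sub_dcEstimator {n : ℕ} {πM πMb : ℝ} (hπM : πM ≠ 0) (hπMb : πMb ≠ 0)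
    (Y M Mb g1 g0 f1 f0 : Fin n → ℝ) :
    dcEstimator πM πMb Y M Mb g1 g0 - dcEstimator πM πMb Y M Mb f1 f0 =
      (1 / ((n : ℝ) * πMb)) * ∑ i, (g0 i - f0 i) * (Mb i - πMb)
        - (1 / ((n : ℝ) * πM)) * ∑ i, (g1 i - f1 i) * (M i - πM) := by
  simp only [dcEstimator, Finset.mul_sum, ← Finset.sum_sub_distrib, ← Finset.sum_add_distrib]
  refine Finset.sum_congr rfl fun i _ ↦ ?_
  field_simp
  ring

lemma sqrt_mul_abs_dcEstimator_sub_le {n : ℕ} (hn : 0 < n) {πM πMb : ℝ} (hπM : 0 < πM)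
    (hπMb : 0 < πMb) {Y M Mb g1 g0 f1 f0 : Fin n → ℝ} {e1 e0 s : ℝ}
    (h1 : |∑ i, (g1 i - f1 i) * (M i - πM)| ≤ √n * e1 * s)
    (h0 : |∑ i, (g0 i - f0 i) * (Mb i - πMb)| ≤ √n * e0 * s) :
    √n * |dcEstimator πM πMb Y M Mb g1 g0 - dcEstimator πM πMb Y M Mb f1 f0| ≤
      (e1 / πM + e0 / πMb) * s := by
  have hn' : (0 : ℝ) < n := by exact_mod_cast hn
  rw [dcEstimator_sub_dcEstimator hπM.ne' hπMb.ne']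
  calc √n * |(1 / ((n : ℝ) * πMb)) * ∑ i, (g0 i - f0 i) * (Mb i - πMb)
        - (1 / ((n : ℝ) * πM)) * ∑ i, (g1 i - f1 i) * (M i - πM)|
      ≤ √n * ((1 / ((n : ℝ) * πMb)) * (√n * e0 * s)
          + (1 / ((n : ℝ) * πM)) * (√n * e1 * s)) := by
        gcongr
        refine (abs_sub _ _).trans (add_le_add ?_ ?_) <;>
          rw [abs_mul, abs_of_pos (by positivity)] <;> gcongr
    _ = (e1 / πM + e0 / πMb) * s := by
        field_simp
        rw [sq_sqrt hn'.le]
        ring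

section Concentration

variable {Ω : Type*} [MeasurableSpace Ω] {P : Measure Ω}

lemma integral_eq_of_forall_eq_zero_or_eq_one {M : Ω → ℝ} (hM : Measurable M)
    (h01 : ∀ ω, M ω = 0 ∨ M ω = 1) {p : ℝ} (hp : 0 ≤ p)
    (hMp : P {ω | M ω = 1} = ENNReal.ofReal p) : P[M] = p := by
  have hind : M = (M ⁻¹' {1}).indicator 1 := by
    funext ω
    rcases h01 ω with h | h <;> simp [h]
  rw [hind, integral_indicator_one (hM (measurableSet_singleton 1)), measureReal_def]
  exact (congrArg ENNReal.toReal hMp).trans (ENNReal.toReal_ofReal hp)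

lemma hasSubgaussianMGF_sub_of_forall_eq_zero_or_eq_one [IsProbabilityMeasure P] {M : Ω → ℝ}
    (hM : Measurable M) (h01 : ∀ ω, M ω = 0 ∨ M ω = 1) {p : ℝ} (hp : 0 ≤ p)
    (hMp : P {ω | M ω = 1} = ENNReal.ofReal p) :
    HasSubgaussianMGF (fun ω ↦ M ω - p) 4⁻¹ P := by
  have hIcc : ∀ᵐ ω ∂P, M ω ∈ Set.Icc (0 : ℝ) 1 :=
    ae_of_all _ fun ω ↦ by rcases h01 ω with h | h <;> simp [h]
  have h := hasSubgaussianMGF_of_mem_Icc hM.aemeasurable hIcc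
  rw [integral_eq_of_forall_eq_zero_or_eq_one hM h01 hp hMp] at h
  convert h using 1
  ext
  norm_num

lemma measureReal_abs_sum_mul_sub_ge_le [IsProbabilityMeasure P] {ι : Type*} [Fintype ι]
    {M : ι → Ω → ℝ} (hM : ∀ i, Measurable (M i)) (h01 : ∀ i ω, M i ω = 0 ∨ M i ω = 1)
    (hindep : iIndepFun M P) {p : ℝ} (hp : 0 ≤ p)
    (hMp : ∀ i, P {ω | M i ω = 1} = ENNReal.ofReal p) (a : ι → ℝ) {ε : ℝ} (hε : 0 ≤ ε) :
    P.real {ω | ε ≤ |∑ i, a i * (M i ω - p)|} ≤ 2 * exp (-2 * ε ^ 2 / ∑ i, a i ^ 2) := by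
  have hsum : HasSubgaussianMGF (fun ω ↦ ∑ i, a i * (M i ω - p))
      (∑ i, ⟨a i ^ 2, sq_nonneg _⟩ * 4⁻¹) P :=
    HasSubgaussianMGF.sum_of_iIndepFun (hindep.comp (fun i m ↦ a i * (m - p)) fun i ↦ by fun_prop)
      fun i _ ↦ (hasSubgaussianMGF_sub_of_forall_eq_zero_or_eq_one (hM i) (h01 i) hp
        (hMp i)).const_mul (a i)
  have hparam : ((∑ i, ⟨a i ^ 2, sq_nonneg _⟩ * 4⁻¹ : NNReal) : ℝ) = (∑ i, a i ^ 2) / 4 := by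
    push_cast
    rw [Finset.sum_div]
    rfl
  have htail : ∀ {X : Ω → ℝ}, HasSubgaussianMGF X (∑ i, ⟨a i ^ 2, sq_nonneg _⟩ * 4⁻¹) P →
      P.real {ω | ε ≤ X ω} ≤ exp (-2 * ε ^ 2 / ∑ i, a i ^ 2) := fun h ↦ by
    refine (h.measure_ge_le hε).trans_eq ?_
    rw [hparam]
    ring_nf
  have hsplit : {ω | ε ≤ |∑ i, a i * (M i ω - p)|} ⊆
      {ω | ε ≤ ∑ i, a i * (M i ω - p)} ∪ {ω | ε ≤ -∑ i, a i * (M i ω - p)} := by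
    intro ω (h : ε ≤ |_|)
    exact le_abs.mp h
  calc P.real {ω | ε ≤ |∑ i, a i * (M i ω - p)|}
      ≤ P.real {ω | ε ≤ ∑ i, a i * (M i ω - p)} + P.real {ω | ε ≤ -∑ i, a i * (M i ω - p)} :=
        (measureReal_mono hsplit).trans (measureReal_union_le _ _)
    _ ≤ 2 * exp (-2 * ε ^ 2 / ∑ i, a i ^ 2) := by
        linarith [htail hsum, htail (X := fun ω ↦ -∑ i, a i * (M i ω - p)) hsum.neg]

lemma measureReal_abs_sum_mul_sub_gt_le_of_empiricalNorm_le [IsProbabilityMeasure P] {n : ℕ}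
    {M : Fin n → Ω → ℝ} (hM : ∀ i, Measurable (M i)) (h01 : ∀ i ω, M i ω = 0 ∨ M i ω = 1)
    (hindep : iIndepFun M P) {p : ℝ} (hp : 0 ≤ p)
    (hMp : ∀ i, P {ω | M i ω = 1} = ENNReal.ofReal p)
    {v : Fin n → ℝ} {e L : ℝ} (hv : empiricalNorm v ≤ e) (hL : 0 ≤ L) :
    P.real {ω | √n * e * √L < |∑ i, v i * (M i ω - p)|} ≤ 2 * exp (-2 * L) := by
  have he : 0 ≤ e := (sqrt_nonneg _).trans hv
  rcases (Finset.sum_nonneg fun i _ ↦ sq_nonneg (v i)).eq_or_lt with hQ | hQ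
  · have hv0 : ∀ i, v i = 0 := fun i ↦
      pow_eq_zero_iff two_ne_zero |>.mp <|
        (Finset.sum_eq_zero_iff_of_nonneg fun i _ ↦ sq_nonneg (v i)).mp hQ.symm i
          (Finset.mem_univ i)
    have hempty : {ω | √n * e * √L < |∑ i, v i * (M i ω - p)|} = ∅ := by
      ext ω
      simp only [hv0, zero_mul, Finset.sum_const_zero, abs_zero, Set.mem_ofPred_eq,
        Set.mem_empty_iff_false, iff_false, not_lt]
      positivity
    rw [hempty, measureReal_empty]
    positivity
  have hexp : exp (-2 * (√n * e * √L) ^ 2 / ∑ i, v i ^ 2) ≤ exp (-2 * L) := by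
    rw [exp_le_exp, div_le_iff₀ hQ, mul_pow, mul_pow, sq_sqrt n.cast_nonneg, sq_sqrt hL]
    nlinarith [sum_sq_le_of_empiricalNorm_le hv]
  calc P.real {ω | √n * e * √L < |∑ i, v i * (M i ω - p)|}
      ≤ P.real {ω | √n * e * √L ≤ |∑ i, v i * (M i ω - p)|} :=
        measureReal_mono (Set.ofPred_subset_ofPred.mpr fun _ ↦ le_of_lt)
    _ ≤ 2 * exp (-2 * (√n * e * √L) ^ 2 / ∑ i, v i ^ 2) :=
        measureReal_abs_sum_mul_sub_ge_le hM h01 hindep hp hMp v (by positivity)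
    _ ≤ 2 * exp (-2 * L) := by linarith

lemma ProbabilityTheory.IndepFun.measure_mem_le_of_forall_fst [IsProbabilityMeasure P]
    {α β : Type*} [MeasurableSpace α] [MeasurableSpace β] {V : Ω → α} {W : Ω → β}
    (hVW : IndepFun V W P) (hV : Measurable V) (hW : Measurable W) {S : Set (α × β)}
    (hS : MeasurableSet S) {K : ENNReal} (hK : ∀ a, P {ω | (a, W ω) ∈ S} ≤ K) :
    P {ω | (V ω, W ω) ∈ S} ≤ K := by
  have := Measure.isProbabilityMeasure_map (μ := P) hV.aemeasurable
  have hmap : P.map (fun ω ↦ (V ω, W ω)) = (P.map V).prod (P.map W) :=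
    (indepFun_iff_map_prod_eq_prod_map_map hV.aemeasurable hW.aemeasurable).mp hVW
  calc P {ω | (V ω, W ω) ∈ S} = (P.map V).prod (P.map W) S := by
        rw [← hmap, Measure.map_apply (hV.prodMk hW) hS]
        rfl
    _ = ∫⁻ a, P {ω | (a, W ω) ∈ S} ∂(P.map V) := by
        rw [Measure.prod_apply hS]
        refine lintegral_congr fun a ↦ ?_
        rw [Measure.map_apply hW (measurable_prodMk_left hS)]
        rfl
    _ ≤ ∫⁻ _, K ∂(P.map V) := lintegral_mono hK
    _ = K := by simp

lemma measureReal_empiricalNorm_le_and_abs_sum_mul_sub_gt_le [IsProbabilityMeasure P] {n : ℕ}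
    {M : Fin n → Ω → ℝ} (hM : ∀ i, Measurable (M i)) (h01 : ∀ i ω, M i ω = 0 ∨ M i ω = 1)
    (hindep : iIndepFun M P) {p : ℝ} (hp : 0 ≤ p)
    (hMp : ∀ i, P {ω | M i ω = 1} = ENNReal.ofReal p)
    {V : Ω → Fin n → ℝ} (hV : Measurable V) (hVM : IndepFun V (fun ω i ↦ M i ω) P)
    (c : Fin n → ℝ) {e L : ℝ} (hL : 0 ≤ L) :
    P.real {ω | empiricalNorm (V ω - c) ≤ e ∧
      √n * e * √L < |∑ i, (V ω i - c i) * (M i ω - p)|} ≤ 2 * exp (-2 * L) := by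
  set S : Set ((Fin n → ℝ) × (Fin n → ℝ)) := {q | empiricalNorm (q.1 - c) ≤ e ∧
    √n * e * √L < |∑ i, (q.1 i - c i) * (q.2 i - p)|}
  have hS : MeasurableSet S := by
    unfold S empiricalNorm
    measurability
  refine ENNReal.toReal_le_of_le_ofReal (by positivity) <|
    hVM.measure_mem_le_of_forall_fst hV (measurable_pi_lambda _ hM) hS fun g ↦ ?_
  by_cases hg : empiricalNorm (g - c) ≤ e
  · rw [← ofReal_measureReal]
    refine ENNReal.ofReal_le_ofReal <| le_of_eq_of_le ?_ <|
      measureReal_abs_sum_mul_sub_gt_le_of_empiricalNorm_le hM h01 hindep hp hMp hg hL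
    simp only [S, Set.mem_ofPred_eq, hg, true_and]
    rfl
  · have hempty : {ω | (g, fun i ↦ M i ω) ∈ S} = ∅ :=
      Set.eq_empty_of_forall_notMem fun ω hω ↦ hg hω.1
    simp [hempty]

lemma measureReal_compl_le_of_ofReal_one_sub_le [IsProbabilityMeasure P] {s : Set Ω}
    (hs : MeasurableSet s) {δ : ℝ} (h : ENNReal.ofReal (1 - δ) ≤ P s) : P.real sᶜ ≤ δ := by
  rw [probReal_compl_eq_one_sub hs, measureReal_def]
  linarith [(ENNReal.ofReal_le_iff_le_toReal (measure_ne_top P s)).mp h]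

lemma ofReal_one_sub_le_of_measureReal_compl_le [IsProbabilityMeasure P] {s : Set Ω} {δ : ℝ}
    (h : P.real sᶜ ≤ δ) : ENNReal.ofReal (1 - δ) ≤ P s := by
  have hunion : 1 ≤ P.real s + P.real sᶜ := by
    simpa [Set.union_compl_self] using measureReal_union_le (μ := P) s sᶜ
  exact (ENNReal.ofReal_le_iff_le_toReal (measure_ne_top P s)).mpr
    (by rw [← measureReal_def]; linarith)

lemma measureReal_abs_sum_mul_sub_gt_le [IsProbabilityMeasure P] {n : ℕ}
    {M : Fin n → Ω → ℝ} (hM : ∀ i, Measurable (M i)) (h01 : ∀ i ω, M i ω = 0 ∨ M i ω = 1)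
    (hindep : iIndepFun M P) {p : ℝ} (hp : 0 ≤ p)
    (hMp : ∀ i, P {ω | M i ω = 1} = ENNReal.ofReal p)
    {V : Ω → Fin n → ℝ} (hV : Measurable V) (hVM : IndepFun V (fun ω i ↦ M i ω) P)
    (c : Fin n → ℝ) {e L η : ℝ} (hL : 0 ≤ L)
    (herr : ENNReal.ofReal (1 - η) ≤ P {ω | empiricalNorm (V ω - c) ≤ e}) :
    P.real {ω | √n * e * √L < |∑ i, (V ω i - c i) * (M i ω - p)|} ≤ η + 2 * exp (-2 * L) := by
  have hsplit : {ω | √n * e * √L < |∑ i, (V ω i - c i) * (M i ω - p)|} ⊆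
      {ω | empiricalNorm (V ω - c) ≤ e}ᶜ ∪ {ω | empiricalNorm (V ω - c) ≤ e ∧
        √n * e * √L < |∑ i, (V ω i - c i) * (M i ω - p)|} := by
    intro ω hω
    by_cases hω' : empiricalNorm (V ω - c) ≤ e
    · exact Or.inr ⟨hω', hω⟩
    · exact Or.inl hω'
  refine (measureReal_mono hsplit).trans <| (measureReal_union_le _ _).trans <| add_le_add ?_ ?_
  · exact measureReal_compl_le_of_ofReal_one_sub_le
      (measurableSet_le (by unfold empiricalNorm; fun_prop) measurable_const) herr
  · exact measureReal_empiricalNorm_le_and_abs_sum_mul_sub_gt_le hM h01 hindep hp hMp hV hVM c hL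

end Concentration

theorem dc_vs_oracle_nonasymptotic_general
    {Ω : Type*} [MeasurableSpace Ω] (P : Measure Ω) [IsProbabilityMeasure P]
    (n d : ℕ) (hn : 0 < n)
    (πR πM πRb πMb : ℝ)
    (hπM : πM ∈ Set.Ioo (0 : ℝ) 1)
    (hπMb : πMb ∈ Set.Ioo (0 : ℝ) 1)
    (x : Fin n → Fin d → ℝ)
    (f1 f0 : (Fin d → ℝ) → ℝ)
    -- the decorrelating quadruples, coupled with the treatment indicators
    (T R M Rb Mb : Fin n → Ω → ℝ)
    (hMmeas : ∀ i, Measurable (M i))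
    (hMbmeas : ∀ i, Measurable (Mb i))
    (hM01 : ∀ i ω, M i ω = 0 ∨ M i ω = 1)
    (hMb01 : ∀ i ω, Mb i ω = 0 ∨ Mb i ω = 1)
    (hMber : ∀ i, P {ω | M i ω = 1} = ENNReal.ofReal πM)
    (hMbber : ∀ i, P {ω | Mb i ω = 1} = ENNReal.ofReal πMb)
    (hiid : iIndepFun
      (fun i ω => (T i ω, R i ω, M i ω, Rb i ω, Mb i ω)) P)
    -- observed outcomes
    (Y : Fin n → Ω → ℝ)
    -- the fitted functions (as random vectors of fitted values at the design points),
    -- each independent of the corresponding averaging indicators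
    (fhatR fhatRb : Ω → Fin n → ℝ)
    (hfhatRmeas : Measurable fhatR) (hfhatRbmeas : Measurable fhatRb)
    (hfhatR_indep : IndepFun fhatR (fun ω (i : Fin n) => M i ω) P)
    (hfhatRb_indep : IndepFun fhatRb (fun ω (i : Fin n) => Mb i ω) P)
    -- high-probability error functions for the two regression estimates
    (ε1 ε0 : ℝ → ℝ → ℝ)
    (herr1 : ∀ δ' ∈ Set.Ioo (0 : ℝ) 1,
      ENNReal.ofReal (1 - δ') ≤
        P {ω | Real.sqrt ((1 / (n : ℝ)) * ∑ i, (fhatR ω i - f1 (x i)) ^ 2) ≤ ε1 πR δ'})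
    (herr0 : ∀ δ' ∈ Set.Ioo (0 : ℝ) 1,
      ENNReal.ofReal (1 - δ') ≤
        P {ω | Real.sqrt ((1 / (n : ℝ)) * ∑ i, (fhatRb ω i - f0 (x i)) ^ 2) ≤ ε0 πRb δ'})
    -- the decorrelated estimator and its oracle version
    (τdc τora : Ω → ℝ)
    (hτdc : ∀ ω, τdc ω =
      (1 / ((n : ℝ) * πM)) * ∑ i, (Y i ω - fhatR ω i) * M i ω
        - (1 / ((n : ℝ) * πMb)) * ∑ i, (Y i ω - fhatRb ω i) * Mb i ω
        + (1 / (n : ℝ)) * ∑ i, (fhatR ω i - fhatRb ω i))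
    (hτora : ∀ ω, τora ω =
      (1 / ((n : ℝ) * πM)) * ∑ i, (Y i ω - f1 (x i)) * M i ω
        - (1 / ((n : ℝ) * πMb)) * ∑ i, (Y i ω - f0 (x i)) * Mb i ω
        + (1 / (n : ℝ)) * ∑ i, (f1 (x i) - f0 (x i)))
    (δ : ℝ) (hδ : δ ∈ Set.Ioo (0 : ℝ) 1) :
    ENNReal.ofReal (1 - δ) ≤
      P {ω | Real.sqrt (n : ℝ) * |τdc ω - τora ω| ≤
        (ε1 πR (δ / 4) / πM + ε0 πRb (δ / 4) / πMb) * Real.sqrt (Real.log (4 / δ))} := by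
  obtain ⟨hδ0, hδ1⟩ := hδ
  set L := log (4 / δ)
  have hL : 0 ≤ L := log_nonneg <| (le_div_iff₀ hδ0).mpr (by linarith)
  have hexpL : 2 * exp (-2 * L) = δ ^ 2 / 8 := by
    rw [show -2 * L = -(L + L) by ring, exp_neg, exp_add, exp_log (by positivity)]
    field_simp
    ring
  set B1 := {ω | √n * ε1 πR (δ / 4) * √L < |∑ i, (fhatR ω i - f1 (x i)) * (M i ω - πM)|}
  set B0 := {ω | √n * ε0 πRb (δ / 4) * √L < |∑ i, (fhatRb ω i - f0 (x i)) * (Mb i ω - πMb)|}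
  have hB1 : P.real B1 ≤ δ / 4 + 2 * exp (-2 * L) :=
    measureReal_abs_sum_mul_sub_gt_le hMmeas hM01
      (hiid.comp (fun _ q ↦ q.2.2.1) fun _ ↦ by fun_prop) hπM.1.le hMber hfhatRmeas
      hfhatR_indep _ hL (herr1 _ ⟨by linarith, by linarith⟩)
  have hB0 : P.real B0 ≤ δ / 4 + 2 * exp (-2 * L) :=
    measureReal_abs_sum_mul_sub_gt_le hMbmeas hMb01
      (hiid.comp (fun _ q ↦ q.2.2.2.2) fun _ ↦ by fun_prop) hπMb.1.le hMbber hfhatRbmeas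
      hfhatRb_indep _ hL (herr0 _ ⟨by linarith, by linarith⟩)
  have hgood : (B1 ∪ B0)ᶜ ⊆ {ω | √n * |τdc ω - τora ω| ≤
      (ε1 πR (δ / 4) / πM + ε0 πRb (δ / 4) / πMb) * √L} := fun ω hω ↦ by
    rw [Set.compl_union] at hω
    show √n * |τdc ω - τora ω| ≤ _
    rw [hτdc, hτora]
    exact sqrt_mul_abs_dcEstimator_sub_le (Y := (Y · ω)) hn hπM.1 hπMb.1
      (not_lt.mp hω.1) (not_lt.mp hω.2)
  refine ofReal_one_sub_le_of_measureReal_compl_le ?_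
  calc _ ≤ P.real (B1 ∪ B0) := measureReal_mono (Set.compl_subset_comm.mp hgood)
    _ ≤ P.real B1 + P.real B0 := measureReal_union_le _ _
    _ ≤ δ := by nlinarith

/-- Theorem 1 of the paper: non-asymptotic bound on the difference
between the decorrelated estimator and its oracle version; `f̂_R` (resp. `f̂_R̄`) is
represented by the random vector of its fitted values at the design points, and it is
independent of `(M_i)_i` (resp. `(M̄_i)_i`). -/
theorem dc_vs_oracle_nonasymptotic
    {Ω : Type*} [MeasurableSpace Ω] (P : Measure Ω) [IsProbabilityMeasure P]
    (n d : ℕ) (hn : 0 < n)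
    (πT πR πM πRb πMb : ℝ)
    (hπT : πT ∈ Set.Ioo (0 : ℝ) 1) (hπR : πR ∈ Set.Ioo (0 : ℝ) 1)
    (hπM : πM ∈ Set.Ioo (0 : ℝ) 1) (hπRb : πRb ∈ Set.Ioo (0 : ℝ) 1)
    (hπMb : πMb ∈ Set.Ioo (0 : ℝ) 1)
    (y1 y0 : Fin n → ℝ) (x : Fin n → Fin d → ℝ)
    (f1 f0 : (Fin d → ℝ) → ℝ)
    -- the decorrelating quadruples, coupled with the treatment indicators
    (T R M Rb Mb : Fin n → Ω → ℝ)
    (hTmeas : ∀ i, Measurable (T i)) (hRmeas : ∀ i, Measurable (R i))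
    (hMmeas : ∀ i, Measurable (M i)) (hRbmeas : ∀ i, Measurable (Rb i))
    (hMbmeas : ∀ i, Measurable (Mb i))
    (hT01 : ∀ i ω, T i ω = 0 ∨ T i ω = 1) (hR01 : ∀ i ω, R i ω = 0 ∨ R i ω = 1)
    (hM01 : ∀ i ω, M i ω = 0 ∨ M i ω = 1) (hRb01 : ∀ i ω, Rb i ω = 0 ∨ Rb i ω = 1)
    (hMb01 : ∀ i ω, Mb i ω = 0 ∨ Mb i ω = 1)
    (hTber : ∀ i, P {ω | T i ω = 1} = ENNReal.ofReal πT)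
    (hRber : ∀ i, P {ω | R i ω = 1} = ENNReal.ofReal πR)
    (hMber : ∀ i, P {ω | M i ω = 1} = ENNReal.ofReal πM)
    (hRbber : ∀ i, P {ω | Rb i ω = 1} = ENNReal.ofReal πRb)
    (hMbber : ∀ i, P {ω | Mb i ω = 1} = ENNReal.ofReal πMb)
    (hRM : ∀ i, IndepFun (R i) (M i) P)
    (hRbMb : ∀ i, IndepFun (Rb i) (Mb i) P)
    (hrel : πT = πM + πR - πM * πR)
    (hrelb : 1 - πT = πMb + πRb - πMb * πRb)
    (hcouple : ∀ i ω, max (R i ω) (M i ω) ≤ T i ω ∧ max (Rb i ω) (Mb i ω) ≤ 1 - T i ω)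
    (hiid : iIndepFun
      (fun i ω => (T i ω, R i ω, M i ω, Rb i ω, Mb i ω)) P)
    -- observed outcomes
    (Y : Fin n → Ω → ℝ)
    (hY : ∀ i ω, Y i ω = if T i ω = 1 then y1 i else y0 i)
    -- the fitted functions (as random vectors of fitted values at the design points),
    -- each independent of the corresponding averaging indicators
    (fhatR fhatRb : Ω → Fin n → ℝ)
    (hfhatRmeas : Measurable fhatR) (hfhatRbmeas : Measurable fhatRb)
    (hfhatR_indep : IndepFun fhatR (fun ω (i : Fin n) => M i ω) P)
    (hfhatRb_indep : IndepFun fhatRb (fun ω (i : Fin n) => Mb i ω) P)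
    -- high-probability error functions for the two regression estimates
    (ε1 ε0 : ℝ → ℝ → ℝ)
    (herr1 : ∀ δ' ∈ Set.Ioo (0 : ℝ) 1,
      ENNReal.ofReal (1 - δ') ≤
        P {ω | Real.sqrt ((1 / (n : ℝ)) * ∑ i, (fhatR ω i - f1 (x i)) ^ 2) ≤ ε1 πR δ'})
    (herr0 : ∀ δ' ∈ Set.Ioo (0 : ℝ) 1,
      ENNReal.ofReal (1 - δ') ≤
        P {ω | Real.sqrt ((1 / (n : ℝ)) * ∑ i, (fhatRb ω i - f0 (x i)) ^ 2) ≤ ε0 πRb δ'})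
    -- the decorrelated estimator and its oracle version
    (τdc τora : Ω → ℝ)
    (hτdc : ∀ ω, τdc ω =
      (1 / ((n : ℝ) * πM)) * ∑ i, (Y i ω - fhatR ω i) * M i ω
        - (1 / ((n : ℝ) * πMb)) * ∑ i, (Y i ω - fhatRb ω i) * Mb i ω
        + (1 / (n : ℝ)) * ∑ i, (fhatR ω i - fhatRb ω i))
    (hτora : ∀ ω, τora ω =
      (1 / ((n : ℝ) * πM)) * ∑ i, (Y i ω - f1 (x i)) * M i ω
        - (1 / ((n : ℝ) * πMb)) * ∑ i, (Y i ω - f0 (x i)) * Mb i ω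
        + (1 / (n : ℝ)) * ∑ i, (f1 (x i) - f0 (x i)))
    (δ : ℝ) (hδ : δ ∈ Set.Ioo (0 : ℝ) 1) :
    ENNReal.ofReal (1 - δ) ≤
      P {ω | Real.sqrt (n : ℝ) * |τdc ω - τora ω| ≤
        (ε1 πR (δ / 4) / πM + ε0 πRb (δ / 4) / πMb) * Real.sqrt (Real.log (4 / δ))} :=
  dc_vs_oracle_nonasymptotic_general P n d hn πR πM πRb πMb hπM hπMb x f1 f0 T R M Rb Mb hMmeas
    hMbmeas hM01 hMb01 hMber hMbber hiid Y fhatR fhatRb hfhatRmeas hfhatRbmeas hfhatR_indep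
    hfhatRb_indep ε1 ε0 herr1 herr0 τdc τora hτdc hτora δ hδ
end
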